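/- If φ is an automorphism of the unit disc, then the composition operator C_φ on the Bloch space satisfies 1 ≤ ‖C_φ‖ ≤ 1 + (1/2) log((1+|φ(0)|)/(1-|φ(0)|)). -/

import Mathlib

open Complex Metric Set Filter MeasureTheory Finset

noncomputable section

/-- The open unit disc in ℂ. -/
def D1 : Set ℂ := Metric.ball 0 1

/-- Analytic (holomorphic) on the open unit disc. -/
def AnalyticOnD (f : ℂ → ℂ) : Prop := DifferentiableOn ℂ f D1

/-- Bloch seminorm. -/
def blochSemi (f : ℂ → ℂ) : ℝ := ⨆ z : D1, (1 - ‖(z : ℂ)‖ ^ 2) * ‖deriv f (z : ℂ)‖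

/-- Bloch norm. -/
def blochNorm (f : ℂ → ℂ) : ℝ := ‖f 0‖ + blochSemi f

/-- Membership in the Bloch space. -/
def InBloch (f : ℂ → ℂ) : Prop :=
  AnalyticOnD f ∧ ∃ C, ∀ z ∈ D1, (1 - ‖z‖ ^ 2) * ‖deriv f z‖ ≤ C

/-- Sup norm over the unit disc. -/
def supNormD (f : ℂ → ℂ) : ℝ := ⨆ z : D1, ‖f (z : ℂ)‖

/-- Weighted composition operator uC_φ. -/
def wco (u φ : ℂ → ℂ) (f : ℂ → ℂ) : ℂ → ℂ := fun z => u z * f (φ z)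

/-- Multiplication operator M_u. -/
def mult (u : ℂ → ℂ) (f : ℂ → ℂ) : ℂ → ℂ := fun z => u z * f z

/-- The weight u_{(n)} = ∏_{j=0}^{n-1} u ∘ φ_j. -/
def wprod (u φ : ℂ → ℂ) (n : ℕ) : ℂ → ℂ := fun z => ∏ j ∈ Finset.range n, u (φ^[j] z)

/-- Boundedness of an operator on the Bloch space. -/
def BddOnBloch (T : (ℂ → ℂ) → (ℂ → ℂ)) : Prop :=
  ∃ C, ∀ f, InBloch f → InBloch (T f) ∧ blochNorm (T f) ≤ C * blochNorm f

/-- Operator norm on the Bloch space. -/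
def opNormB (T : (ℂ → ℂ) → (ℂ → ℂ)) : ℝ :=
  sInf {C : ℝ | 0 ≤ C ∧ ∀ f, InBloch f → blochNorm (T f) ≤ C * blochNorm f}

/-- Invertibility of an operator on the Bloch space (bounded two-sided inverse). -/
def InvertibleOnBloch (T : (ℂ → ℂ) → (ℂ → ℂ)) : Prop :=
  BddOnBloch T ∧ ∃ S, BddOnBloch S ∧
    ∀ f, InBloch f → Set.EqOn (S (T f)) f D1 ∧ Set.EqOn (T (S f)) f D1

/-- Spectrum of an operator acting on the Bloch space. -/
def blochSpectrum (T : (ℂ → ℂ) → (ℂ → ℂ)) : Set ℂ :=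
  {lam | ¬ InvertibleOnBloch (fun f z => lam * f z - T f z)}

/-- Automorphism of the unit disc (Möbius form). -/
def IsDiscAuto (φ : ℂ → ℂ) : Prop :=
  ∃ lam a : ℂ, ‖lam‖ = 1 ∧ a ∈ D1 ∧ ∀ z, φ z = lam * (a - z) / (1 - (starRingEnd ℂ) a * z)

/-- Hyperbolic distance on the unit disc. -/
def hypDist (z w : ℂ) : ℝ :=
  (1 / 2) * Real.log ((1 + ‖(z - w) / (1 - (starRingEnd ℂ) z * w)‖) /
    (1 - ‖(z - w) / (1 - (starRingEnd ℂ) z * w)‖))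

/-- The disc algebra A(𝔻). -/
def InDiscAlgebra (u : ℂ → ℂ) : Prop :=
  ContinuousOn u (Metric.closedBall 0 1) ∧ AnalyticOnD u

/-- u is bounded away from zero on the unit disc. -/
def BoundedAwayFromZero (u : ℂ → ℂ) : Prop := ∃ δ > 0, ∀ z ∈ D1, δ ≤ ‖u z‖

/-- Parabolic automorphism with unique fixed point a on the unit circle (φ'(a)=1). -/
def IsParabolicAuto (φ : ℂ → ℂ) (a : ℂ) : Prop :=
  IsDiscAuto φ ∧ ‖a‖ = 1 ∧ φ a = a ∧ deriv φ a = 1 ∧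
    ∀ w, ‖w‖ ≤ 1 → φ w = w → w = a

/-- Hyperbolic automorphism with attractive fixed point a and repulsive fixed point b. -/
def IsHyperbolicAuto (φ : ℂ → ℂ) (a b : ℂ) : Prop :=
  IsDiscAuto φ ∧ ‖a‖ = 1 ∧ ‖b‖ = 1 ∧ a ≠ b ∧ φ a = a ∧ φ b = b ∧
    ∃ μ : ℝ, 0 < μ ∧ μ < 1 ∧ deriv φ a = (μ : ℂ)

/-- Square of the Dirichlet norm (normalized area measure on 𝔻). -/
def dirichletNormSq (f : ℂ → ℂ) : ℝ :=
  ‖f 0‖ ^ 2 + (1 / Real.pi) * ∫ z in D1, ‖deriv f z‖ ^ 2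

/-- Dirichlet norm. -/
def dirichletNorm (f : ℂ → ℂ) : ℝ := Real.sqrt (dirichletNormSq f)

/-- Membership in the Dirichlet space. -/
def InDirichlet (f : ℂ → ℂ) : Prop :=
  AnalyticOnD f ∧ MeasureTheory.IntegrableOn (fun z => ‖deriv f z‖ ^ 2) D1

/-- Boundedness of an operator on the Dirichlet space. -/
def BddOnDirichlet (T : (ℂ → ℂ) → (ℂ → ℂ)) : Prop :=
  ∃ C, ∀ f, InDirichlet f → InDirichlet (T f) ∧ dirichletNorm (T f) ≤ C * dirichletNorm f

/-- Operator norm on the Dirichlet space. -/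
def opNormDir (T : (ℂ → ℂ) → (ℂ → ℂ)) : ℝ :=
  sInf {C : ℝ | 0 ≤ C ∧ ∀ f, InDirichlet f → dirichletNorm (T f) ≤ C * dirichletNorm f}

/-- Invertibility of an operator on the Dirichlet space. -/
def InvertibleOnDirichlet (T : (ℂ → ℂ) → (ℂ → ℂ)) : Prop :=
  BddOnDirichlet T ∧ ∃ S, BddOnDirichlet S ∧
    ∀ f, InDirichlet f → Set.EqOn (S (T f)) f D1 ∧ Set.EqOn (T (S f)) f D1

/-- Spectrum of an operator on the Dirichlet space. -/
def dirichletSpectrum (T : (ℂ → ℂ) → (ℂ → ℂ)) : Set ℂ :=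
  {lam | ¬ InvertibleOnDirichlet (fun f z => lam * f z - T f z)}

/-- Operator norm of M_{u'} : B → H^∞_{v₁}. -/
def opNormBtoHv1 (u : ℂ → ℂ) : ℝ :=
  sInf {C : ℝ | 0 ≤ C ∧ ∀ f, InBloch f → ∀ z ∈ D1,
    (1 - ‖z‖ ^ 2) * ‖deriv u z * f z‖ ≤ C * blochNorm f}

/-- Operator norm of M_{u'} : 𝒟 → A². -/
def opNormDtoA2 (u : ℂ → ℂ) : ℝ :=
  sInf {C : ℝ | 0 ≤ C ∧ ∀ f, InDirichlet f →
    Real.sqrt ((1 / Real.pi) * ∫ z in D1, ‖deriv u z * f z‖ ^ 2) ≤ C * dirichletNorm f}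

/-- The logarithmic weight log(e/(1-|z|²)). -/
def logWeight (z : ℂ) : ℝ := Real.log (Real.exp 1 / (1 - ‖z‖ ^ 2))

/-- Characterization of multipliers of the Bloch space: u ∈ H^∞ and the log condition. -/
def MultBChar (u : ℂ → ℂ) : Prop :=
  (∃ M, ∀ z ∈ D1, ‖u z‖ ≤ M) ∧
  (∃ M, ∀ z ∈ D1, (1 - ‖z‖ ^ 2) * ‖deriv u z‖ * logWeight z ≤ M)

/-! Disc automorphisms are hyperbolic isometries, `(1 - ‖z‖²) ‖φ' z‖ = 1 - ‖φ z‖²`, so composing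
with one does not increase the Bloch seminorm `s` of `f`; only the value at `0` moves. Integrating
the bound `‖f' z‖ ≤ s / (1 - ‖z‖²)` along the radius from `0` to `φ 0` gives
`‖f (φ 0) - f 0‖ ≤ s · artanh ‖φ 0‖`, whence the upper bound. The constant `1` is fixed by every
composition operator, which gives the lower bound. -/

theorem Real.hasDerivAt_artanh {x : ℝ} (hx : x ∈ Set.Ioo (-1) 1) :
    HasDerivAt Real.artanh (1 / (1 - x ^ 2)) x := by
  have h₁ : 0 < 1 + x := by linarith [hx.1]
  have h₂ : 0 < 1 - x := by linarith [hx.2]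
  have hlog : HasDerivAt (fun y => 1 / 2 * Real.log ((1 + y) / (1 - y))) (1 / (1 - x ^ 2)) x := by
    have hq : HasDerivAt (fun y => (1 + y) / (1 - y))
        ((1 * (1 - x) - (1 + x) * -1) / (1 - x) ^ 2) x :=
      (((hasDerivAt_id x).const_add 1).div ((hasDerivAt_id x).const_sub 1) h₂.ne').congr_deriv
        (by simp)
    refine ((hq.log (div_pos h₁ h₂).ne').const_mul (1 / 2)).congr_deriv ?_
    have h₃ : 1 - x ^ 2 ≠ 0 := by nlinarith
    field_simp
    ring
  refine hlog.congr_of_eventuallyEq ?_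
  filter_upwards [Ioo_mem_nhds hx.1 hx.2] with y hy
  exact Real.artanh_eq_half_log (Set.Ioo_subset_Icc_self hy)

theorem mem_D1_iff {z : ℂ} : z ∈ D1 ↔ ‖z‖ < 1 := mem_ball_zero_iff

theorem zero_mem_D1 : (0 : ℂ) ∈ D1 := mem_D1_iff.2 (by simp)

instance : Nonempty D1 := ⟨⟨0, zero_mem_D1⟩⟩

theorem InBloch.le_blochSemi {f : ℂ → ℂ} (hf : InBloch f) {z : ℂ} (hz : z ∈ D1) :
    (1 - ‖z‖ ^ 2) * ‖deriv f z‖ ≤ blochSemi f := by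
  obtain ⟨-, C, hC⟩ := hf
  exact le_ciSup (f := fun z : D1 => (1 - ‖(z : ℂ)‖ ^ 2) * ‖deriv f z‖)
    ⟨C, by rintro _ ⟨z, rfl⟩; exact hC z z.2⟩ ⟨z, hz⟩

theorem norm_sub_le_mul_artanh {f : ℂ → ℂ} (hf : DifferentiableOn ℂ f D1) {s : ℝ}
    (hs : ∀ z ∈ D1, (1 - ‖z‖ ^ 2) * ‖deriv f z‖ ≤ s) {w : ℂ} (hw : w ∈ D1) :
    ‖f w - f 0‖ ≤ s * Real.artanh ‖w‖ := by
  set r := ‖w‖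
  have hr : r < 1 := mem_D1_iff.1 hw
  have htr : ∀ t ∈ Set.Icc (0 : ℝ) 1, t * r ∈ Set.Ioo (-1) 1 := fun t ht =>
    ⟨by nlinarith [ht.1, norm_nonneg w], by nlinarith [ht.2, norm_nonneg w]⟩
  have hmem : ∀ t ∈ Set.Icc (0 : ℝ) 1, (t : ℂ) * w ∈ D1 := fun t ht => by
    rw [mem_D1_iff, norm_mul, Complex.norm_real, Real.norm_of_nonneg ht.1]
    exact (htr t ht).2
  have hderiv : ∀ t ∈ Set.Icc (0 : ℝ) 1,
      HasDerivAt (fun t : ℝ => f (t * w) - f 0) (deriv f (t * w) * w) t := fun t ht => by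
    have hγ : HasDerivAt (fun t : ℝ => (t : ℂ) * w) w t := by
      simpa using (hasDerivAt_id t).ofReal_comp.mul_const w
    have hft := (hf.differentiableAt (isOpen_ball.mem_nhds (hmem t ht))).hasDerivAt
    exact (hft.comp t hγ).sub_const (f 0)
  have hB : ∀ t ∈ Set.Icc (0 : ℝ) 1,
      HasDerivAt (fun t => s * Real.artanh (t * r)) (s * r / (1 - (t * r) ^ 2)) t := fun t ht => by
    have h := ((Real.hasDerivAt_artanh (htr t ht)).comp t (hasDerivAt_mul_const r)).const_mul s
    exact h.congr_deriv (by ring)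
  have hbound : ∀ t ∈ Set.Ico (0 : ℝ) 1,
      ‖deriv f (t * w) * w‖ ≤ s * r / (1 - (t * r) ^ 2) := fun t ht => by
    have htr' := htr t (Set.Ico_subset_Icc_self ht)
    have hpos : 0 < 1 - (t * r) ^ 2 := by nlinarith [htr'.1, htr'.2]
    have hst := hs _ (hmem t (Set.Ico_subset_Icc_self ht))
    rw [norm_mul, Complex.norm_real, Real.norm_of_nonneg ht.1, mul_pow] at hst
    rw [norm_mul, le_div_iff₀ hpos]
    nlinarith [mul_le_mul_of_nonneg_left hst (norm_nonneg w)]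
  simpa using image_norm_le_of_norm_deriv_right_le_deriv_boundary'
    (fun t ht => (hderiv t ht).continuousAt.continuousWithinAt)
    (fun t ht => (hderiv t (Set.Ico_subset_Icc_self ht)).hasDerivWithinAt)
    (by simp) (fun t ht => (hB t ht).continuousAt.continuousWithinAt)
    (fun t ht => (hB t (Set.Ico_subset_Icc_self ht)).hasDerivWithinAt) hbound
    (Set.right_mem_Icc.2 zero_le_one)

theorem InBloch.norm_sub_le_blochSemi_mul_artanh {f : ℂ → ℂ} (hf : InBloch f) {w : ℂ}
    (hw : w ∈ D1) : ‖f w - f 0‖ ≤ blochSemi f * Real.artanh ‖w‖ :=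
  norm_sub_le_mul_artanh hf.1 (fun _ => hf.le_blochSemi) hw

theorem InBloch.blochSemi_comp_le {f φ : ℂ → ℂ} (hf : InBloch f) (hmaps : MapsTo φ D1 D1)
    (hφ : DifferentiableOn ℂ φ D1)
    (hpick : ∀ z ∈ D1, (1 - ‖z‖ ^ 2) * ‖deriv φ z‖ ≤ 1 - ‖φ z‖ ^ 2) :
    blochSemi (f ∘ φ) ≤ blochSemi f := by
  refine ciSup_le fun ⟨z, hz⟩ => ?_
  have hfφ : DifferentiableAt ℂ f (φ z) := hf.1.differentiableAt (isOpen_ball.mem_nhds (hmaps hz))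
  have hφz : DifferentiableAt ℂ φ z := hφ.differentiableAt (isOpen_ball.mem_nhds hz)
  calc (1 - ‖z‖ ^ 2) * ‖deriv (f ∘ φ) z‖
      = ‖deriv f (φ z)‖ * ((1 - ‖z‖ ^ 2) * ‖deriv φ z‖) := by
        rw [deriv_comp z hfφ hφz, norm_mul]; ring
    _ ≤ ‖deriv f (φ z)‖ * (1 - ‖φ z‖ ^ 2) := by gcongr; exact hpick z hz
    _ = (1 - ‖φ z‖ ^ 2) * ‖deriv f (φ z)‖ := mul_comm _ _
    _ ≤ blochSemi f := hf.le_blochSemi (hmaps hz)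

theorem InBloch.blochNorm_comp_le {f φ : ℂ → ℂ} (hf : InBloch f) (hmaps : MapsTo φ D1 D1)
    (hφ : DifferentiableOn ℂ φ D1)
    (hpick : ∀ z ∈ D1, (1 - ‖z‖ ^ 2) * ‖deriv φ z‖ ≤ 1 - ‖φ z‖ ^ 2) :
    blochNorm (f ∘ φ) ≤ (1 + Real.artanh ‖φ 0‖) * blochNorm f := by
  have hsemi := hf.blochSemi_comp_le hmaps hφ hpick
  have hgrowth := hf.norm_sub_le_blochSemi_mul_artanh (hmaps zero_mem_D1)
  have hA : 0 ≤ Real.artanh ‖φ 0‖ := Real.artanh_nonneg (norm_nonneg _)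
  have hf0 : ‖f (φ 0)‖ ≤ ‖f 0‖ + blochSemi f * Real.artanh ‖φ 0‖ := by
    linarith [norm_le_norm_add_norm_sub' (f (φ 0)) (f 0)]
  rw [blochNorm, blochNorm, Function.comp_apply]
  nlinarith [mul_nonneg hA (norm_nonneg (f 0))]

theorem opNormB_le {T : (ℂ → ℂ) → ℂ → ℂ} {C : ℝ} (hC : 0 ≤ C)
    (hT : ∀ f, InBloch f → blochNorm (T f) ≤ C * blochNorm f) : opNormB T ≤ C :=
  csInf_le ⟨0, fun _ h => h.1⟩ ⟨hC, hT⟩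

theorem blochNorm_le_opNormB {T : (ℂ → ℂ) → ℂ → ℂ}
    (hT : ∃ C, 0 ≤ C ∧ ∀ f, InBloch f → blochNorm (T f) ≤ C * blochNorm f) {f : ℂ → ℂ}
    (hf : InBloch f) (hf1 : blochNorm f = 1) : blochNorm (T f) ≤ opNormB T :=
  le_csInf hT fun C hC => by simpa [hf1] using hC.2 f hf

theorem inBloch_const (c : ℂ) : InBloch fun _ => c :=
  ⟨differentiableOn_const c, 0, fun z _ => by simp⟩

theorem blochNorm_const (c : ℂ) : blochNorm (fun _ => c) = ‖c‖ := by
  simp [blochNorm, blochSemi]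

theorem one_le_opNormB_comp {φ : ℂ → ℂ}
    (hφ : ∃ C, 0 ≤ C ∧ ∀ f, InBloch f → blochNorm (f ∘ φ) ≤ C * blochNorm f) :
    1 ≤ opNormB (fun f => f ∘ φ) := by
  simpa [Function.comp_def, blochNorm_const] using
    blochNorm_le_opNormB hφ (inBloch_const 1) (by simp [blochNorm_const])

def discAuto (lam a z : ℂ) : ℂ := lam * (a - z) / (1 - starRingEnd ℂ a * z)

theorem sq_norm_one_sub_conj_mul_sub_sq_norm_sub (a z : ℂ) :
    ‖1 - starRingEnd ℂ a * z‖ ^ 2 - ‖a - z‖ ^ 2 = (1 - ‖a‖ ^ 2) * (1 - ‖z‖ ^ 2) := by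
  simp only [← Complex.normSq_eq_norm_sq, Complex.normSq_apply, sub_re, sub_im, mul_re, mul_im,
    one_re, one_im, conj_re, conj_im]
  ring

theorem one_sub_conj_mul_ne_zero {a z : ℂ} (ha : ‖a‖ < 1) (hz : ‖z‖ < 1) :
    1 - starRingEnd ℂ a * z ≠ 0 := by
  have : ‖starRingEnd ℂ a * z‖ < 1 := by
    rw [norm_mul, RCLike.norm_conj]
    nlinarith [norm_nonneg a, norm_nonneg z]
  intro h
  rw [← sub_eq_zero.1 h, norm_one] at this
  exact this.false

section discAuto

variable {lam a z : ℂ}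

theorem one_sub_sq_norm_discAuto (hlam : ‖lam‖ = 1) (ha : ‖a‖ < 1) (hz : ‖z‖ < 1) :
    1 - ‖discAuto lam a z‖ ^ 2
      = (1 - ‖a‖ ^ 2) * (1 - ‖z‖ ^ 2) / ‖1 - starRingEnd ℂ a * z‖ ^ 2 := by
  have hden : ‖1 - starRingEnd ℂ a * z‖ ^ 2 ≠ 0 := by
    simpa using one_sub_conj_mul_ne_zero ha hz
  rw [discAuto, norm_div, norm_mul, hlam, one_mul, div_pow, eq_div_iff hden, sub_mul, one_mul,
    div_mul_cancel₀ _ hden, sq_norm_one_sub_conj_mul_sub_sq_norm_sub]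

theorem norm_discAuto_lt_one (hlam : ‖lam‖ = 1) (ha : ‖a‖ < 1) (hz : ‖z‖ < 1) :
    ‖discAuto lam a z‖ < 1 := by
  have hpos : 0 < 1 - ‖discAuto lam a z‖ ^ 2 := by
    rw [one_sub_sq_norm_discAuto hlam ha hz]
    have hden := norm_pos_iff.2 (one_sub_conj_mul_ne_zero ha hz)
    have ha2 : ‖a‖ ^ 2 < 1 := by nlinarith [norm_nonneg a]
    have hz2 : ‖z‖ ^ 2 < 1 := by nlinarith [norm_nonneg z]
    apply div_pos <;> nlinarith
  nlinarith [norm_nonneg (discAuto lam a z)]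

theorem hasDerivAt_discAuto (ha : ‖a‖ < 1) (hz : ‖z‖ < 1) :
    HasDerivAt (discAuto lam a)
      (lam * (‖a‖ ^ 2 - 1) / (1 - starRingEnd ℂ a * z) ^ 2) z := by
  have hden := one_sub_conj_mul_ne_zero ha hz
  have h := (((hasDerivAt_id z).const_sub a).const_mul lam).div
    (((hasDerivAt_id z).const_mul (starRingEnd ℂ a)).const_sub 1) hden
  refine h.congr_deriv ?_
  simp only [id, ← Complex.conj_mul']
  ring

theorem one_sub_sq_mul_norm_deriv_discAuto (hlam : ‖lam‖ = 1) (ha : ‖a‖ < 1) (hz : ‖z‖ < 1) :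
    (1 - ‖z‖ ^ 2) * ‖deriv (discAuto lam a) z‖ = 1 - ‖discAuto lam a z‖ ^ 2 := by
  have hcast : (‖a‖ ^ 2 - 1 : ℂ) = ((‖a‖ ^ 2 - 1 : ℝ) : ℂ) := by push_cast; ring
  have ha2 : ‖a‖ ^ 2 - 1 ≤ 0 := by nlinarith [norm_nonneg a]
  rw [(hasDerivAt_discAuto ha hz).deriv, one_sub_sq_norm_discAuto hlam ha hz, norm_div,
    norm_mul, hlam, one_mul, hcast, Complex.norm_real, Real.norm_of_nonpos ha2, norm_pow]
  ring

end discAuto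

theorem mapsTo_discAuto {lam a : ℂ} (hlam : ‖lam‖ = 1) (ha : ‖a‖ < 1) :
    MapsTo (discAuto lam a) D1 D1 := fun _ hz =>
  mem_D1_iff.2 (norm_discAuto_lt_one hlam ha (mem_D1_iff.1 hz))

theorem differentiableOn_discAuto {lam a : ℂ} (ha : ‖a‖ < 1) :
    DifferentiableOn ℂ (discAuto lam a) D1 := fun _ hz =>
  (hasDerivAt_discAuto ha (mem_D1_iff.1 hz)).differentiableAt.differentiableWithinAt

/-- norm estimate for composition operators with automorphic symbol on B. -/
theorem stmt_8 (φ : ℂ → ℂ) (hφ : IsDiscAuto φ) :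
    1 ≤ opNormB (fun f => f ∘ φ) ∧
      opNormB (fun f => f ∘ φ) ≤ 1 + (1 / 2) * Real.log ((1 + ‖φ 0‖) / (1 - ‖φ 0‖)) := by
  obtain ⟨lam, a, hlam, haD, hφ⟩ := hφ
  obtain rfl : φ = discAuto lam a := funext hφ
  have ha : ‖a‖ < 1 := mem_D1_iff.1 haD
  have hmaps := mapsTo_discAuto hlam ha
  have hbound : ∀ f, InBloch f →
      blochNorm (f ∘ discAuto lam a) ≤ (1 + Real.artanh ‖discAuto lam a 0‖) * blochNorm f :=
    fun f hf => hf.blochNorm_comp_le hmaps (differentiableOn_discAuto ha) fun z hz =>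
      (one_sub_sq_mul_norm_deriv_discAuto hlam ha (mem_D1_iff.1 hz)).le
  have hC : 0 ≤ 1 + Real.artanh ‖discAuto lam a 0‖ := by
    linarith [Real.artanh_nonneg (norm_nonneg (discAuto lam a 0))]
  have hφ0 : ‖discAuto lam a 0‖ < 1 := mem_D1_iff.1 (hmaps zero_mem_D1)
  rw [← Real.artanh_eq_half_log ⟨by linarith [norm_nonneg (discAuto lam a 0)], hφ0.le⟩]
  exact ⟨one_le_opNormB_comp ⟨_, hC, hbound⟩, opNormB_le hC hbound⟩
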